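/- Let X be the Cayley graph of an infinite finitely generated group. Suppose there exist ε with 0 < ε ≤ 1/4, L ≥ 1, and R ∈ ℕ with εR ≥ 1 such that for any vertices x₁, x₂, m with d(x₁,m) = d(x₂,m) = R there exists a path from x₁ to x₂ of length at most L·R avoiding the ball B_{εR}(m). Then the divergence function of X satisfies Div(εR) ≤ (L+4)·R + 1. -/

import Mathlib

/-!
Write `r = min (d(c, a), d(c, b))`. If `r > εR - 4`, a geodesic from `a` to `b` already avoids
`B_{r/2-2}(c)`, since `2 d(c, p) ≥ d(c, a) + d(c, b) - d(a, b)` along it. Otherwise `a` and `b` lie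
within `R` of `c`. In an infinite group, for every `u` there are arbitrarily long `y` with
`|u y| ≤ |y| + 3`; with `u = a⁻¹ c` this yields a far point `w` with `d(a, w) ≤ d(c, w) + 3`, and
the geodesic from `a` towards `w` reaches the sphere `S_R(c)` within `R + 3` steps while keeping
`2 d(c, p) + 3 ≥ d(c, a)`. Doing the same from `b` and joining the two sphere points by the
assumed detour of length `LR` outside `B_{εR}(c)` gives a path of length `≤ (L + 2) R + 6`.
-/

open Pointwise

/-- The symmetrized generating set `S ∪ S⁻¹`. -/
def genSet {G : Type} [Group G] (S : Finset G) : Set G :=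
  (S : Set G) ∪ (S : Set G)⁻¹

/-- Word length of `g` with respect to `S`. -/
noncomputable def wlen {G : Type} [Group G] (S : Finset G) (g : G) : ℕ :=
  sInf {n : ℕ | g ∈ (genSet S) ^ n}

/-- Word distance. -/
noncomputable def wdist {G : Type} [Group G] (S : Finset G) (x y : G) : ℕ :=
  wlen S (x⁻¹ * y)

/-- `p` is an edge path of length `ℓ` from `x` to `y` in the Cayley graph. -/
def IsPathFrom {G : Type} [Group G] (S : Finset G) (p : ℕ → G) (ℓ : ℕ) (x y : G) : Prop :=
  p 0 = x ∧ p ℓ = y ∧ ∀ i < ℓ, (p i)⁻¹ * p (i + 1) ∈ genSet S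

def JoinedWithin {G : Type} [Group G] (S : Finset G) (U : Set G) (N : ℝ) (x y : G) :
    Prop :=
  ∃ (ℓ : ℕ) (p : ℕ → G), IsPathFrom S p ℓ x y ∧ (ℓ : ℝ) ≤ N ∧ ∀ i ≤ ℓ, p i ∈ U

section WordMetric

variable {G : Type} [Group G] {S : Finset G}

lemma inv_mem_genSet {g : G} (h : g ∈ genSet S) : g⁻¹ ∈ genSet S := by
  rcases h with h | h
  · exact Or.inr (by simpa using h)
  · exact Or.inl (by simpa using h)

lemma inv_mem_genSet_pow {n : ℕ} {g : G} (h : g ∈ genSet S ^ n) : g⁻¹ ∈ genSet S ^ n := by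
  induction n generalizing g with
  | zero => simp_all
  | succ n ih =>
    rw [pow_succ] at h
    obtain ⟨x, hx, y, hy, rfl⟩ := h
    rw [pow_succ', mul_inv_rev]
    exact Set.mul_mem_mul (inv_mem_genSet hy) (ih hx)

lemma exists_mem_genSet_pow (hgen : Subgroup.closure (S : Set G) = ⊤) (g : G) :
    ∃ n, g ∈ genSet S ^ n := by
  induction hgen ▸ Subgroup.mem_top g using Subgroup.closure_induction with
  | mem x hx => exact ⟨1, by simpa [genSet] using Or.inl hx⟩
  | one => exact ⟨0, by simp⟩
  | mul x y _ _ hx hy =>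
    obtain ⟨n, hn⟩ := hx
    obtain ⟨m, hm⟩ := hy
    exact ⟨n + m, by rw [pow_add]; exact Set.mul_mem_mul hn hm⟩
  | inv x _ hx =>
    obtain ⟨n, hn⟩ := hx
    exact ⟨n, inv_mem_genSet_pow hn⟩

lemma mem_genSet_pow_wlen (hgen : Subgroup.closure (S : Set G) = ⊤) (g : G) :
    g ∈ genSet S ^ wlen S g :=
  Nat.sInf_mem (exists_mem_genSet_pow hgen g)

lemma wlen_le_of_mem {g : G} {n : ℕ} (h : g ∈ genSet S ^ n) : wlen S g ≤ n :=
  Nat.sInf_le h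

lemma wlen_one : wlen S (1 : G) = 0 :=
  Nat.le_zero.mp (wlen_le_of_mem (by simp))

lemma wlen_le_one_of_mem {s : G} (h : s ∈ genSet S) : wlen S s ≤ 1 :=
  wlen_le_of_mem (by simpa using h)

lemma wlen_mul_le (hgen : Subgroup.closure (S : Set G) = ⊤) (g h : G) :
    wlen S (g * h) ≤ wlen S g + wlen S h := by
  apply wlen_le_of_mem
  rw [pow_add]
  exact Set.mul_mem_mul (mem_genSet_pow_wlen hgen g) (mem_genSet_pow_wlen hgen h)

lemma wlen_inv (hgen : Subgroup.closure (S : Set G) = ⊤) (g : G) : wlen S g⁻¹ = wlen S g :=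
  le_antisymm (wlen_le_of_mem (inv_mem_genSet_pow (mem_genSet_pow_wlen hgen g)))
    (by simpa using wlen_le_of_mem (inv_mem_genSet_pow (mem_genSet_pow_wlen hgen g⁻¹)))

lemma wdist_comm (hgen : Subgroup.closure (S : Set G) = ⊤) (x y : G) :
    wdist S x y = wdist S y x := by
  rw [wdist, wdist, ← wlen_inv hgen, mul_inv_rev, inv_inv]

lemma wdist_triangle (hgen : Subgroup.closure (S : Set G) = ⊤) (x y z : G) :
    wdist S x z ≤ wdist S x y + wdist S y z := by
  simpa [wdist, mul_assoc] using wlen_mul_le hgen (x⁻¹ * y) (y⁻¹ * z)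

lemma IsPathFrom.wdist_le (hgen : Subgroup.closure (S : Set G) = ⊤) {p : ℕ → G} {ℓ : ℕ}
    {x y : G} (hp : IsPathFrom S p ℓ x y) {i j : ℕ} (hij : i ≤ j) (hj : j ≤ ℓ) :
    wdist S (p i) (p j) ≤ j - i := by
  induction j, hij using Nat.le_induction with
  | base => simp [wdist, wlen_one]
  | succ j hij ih =>
    have hedge : wdist S (p j) (p (j + 1)) ≤ 1 := wlen_le_one_of_mem (hp.2.2 j (by omega))
    have := wdist_triangle hgen (p i) (p j) (p (j + 1))
    have := ih (by omega)
    omega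

lemma exists_isPathFrom_of_mem_pow {n : ℕ} {x y : G} (h : x⁻¹ * y ∈ genSet S ^ n) :
    ∃ p : ℕ → G, IsPathFrom S p n x y := by
  induction n generalizing x with
  | zero => exact ⟨fun _ => x, rfl, by simpa [inv_mul_eq_one] using h, by simp⟩
  | succ n ih =>
    rw [pow_succ'] at h
    obtain ⟨s, hs, g, hg, hsg⟩ := Set.mem_mul.mp h
    obtain ⟨q, hq0, hqn, hq⟩ :=
      ih (x := x * s) (by rwa [mul_inv_rev, mul_assoc, ← hsg, inv_mul_cancel_left])
    refine ⟨fun | 0 => x | i + 1 => q i, rfl, hqn, ?_⟩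
    rintro (_ | i) hi
    · simpa [hq0] using hs
    · exact hq i (by omega)

lemma exists_geodesic (hgen : Subgroup.closure (S : Set G) = ⊤) (x y : G) :
    ∃ p : ℕ → G, IsPathFrom S p (wdist S x y) x y :=
  exists_isPathFrom_of_mem_pow (mem_genSet_pow_wlen hgen _)

lemma IsPathFrom.add_wdist_le_of_geodesic (hgen : Subgroup.closure (S : Set G) = ⊤) {p : ℕ → G}
    {x y : G} (hp : IsPathFrom S p (wdist S x y) x y) (c : G) {i : ℕ} (hi : i ≤ wdist S x y) :
    wdist S c x + wdist S c y ≤ 2 * wdist S c (p i) + wdist S x y := by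
  have hxi := hp.wdist_le hgen (Nat.zero_le i) hi
  have hiy := hp.wdist_le hgen hi le_rfl
  rw [hp.1] at hxi
  rw [hp.2.1] at hiy
  have := wdist_triangle hgen c (p i) x
  have := wdist_triangle hgen c (p i) y
  have := wdist_comm hgen x (p i)
  omega

lemma joinedWithin_geodesic (hgen : Subgroup.closure (S : Set G) = ⊤) (x y c : G) :
    JoinedWithin S {g | wdist S c x + wdist S c y ≤ 2 * wdist S c g + wdist S x y}
      (wdist S x y) x y := by
  obtain ⟨p, hp⟩ := exists_geodesic hgen x y
  exact ⟨_, p, hp, le_rfl, fun i hi => hp.add_wdist_le_of_geodesic hgen c hi⟩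

lemma exists_lt_wlen [Infinite G] (hgen : Subgroup.closure (S : Set G) = ⊤) (N : ℕ) :
    ∃ g : G, N < wlen S g := by
  by_contra! h
  have hfin : ∀ n, (genSet S ^ n).Finite := by
    intro n
    induction n with
    | zero => simp
    | succ n ih => rw [pow_succ]; exact ih.mul (S.finite_toSet.union S.finite_toSet.inv)
  exact Set.infinite_univ (((Set.finite_Iic N).biUnion fun n _ => hfin n).subset
    fun g _ => Set.mem_biUnion (h g) (mem_genSet_pow_wlen hgen g))

end WordMetric

namespace JoinedWithin

variable {G : Type} [Group G] {S : Finset G} {U V : Set G} {N M : ℝ} {x y z : G}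

lemma mono (h : JoinedWithin S U N x y) (hUV : U ⊆ V) (hNM : N ≤ M) :
    JoinedWithin S V M x y := by
  obtain ⟨ℓ, p, hp, hℓ, hpU⟩ := h
  exact ⟨ℓ, p, hp, hℓ.trans hNM, fun i hi => hUV (hpU i hi)⟩

lemma symm (h : JoinedWithin S U N x y) : JoinedWithin S U N y x := by
  obtain ⟨ℓ, p, ⟨hp0, hpℓ, hp⟩, hℓ, hpU⟩ := h
  refine ⟨ℓ, fun i => p (ℓ - i), ⟨by simpa using hpℓ, by simpa using hp0, fun i hi => ?_⟩, hℓ,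
    fun i _ => hpU _ (Nat.sub_le ℓ i)⟩
  have hedge := inv_mem_genSet (hp (ℓ - (i + 1)) (by omega))
  rwa [mul_inv_rev, inv_inv, show ℓ - (i + 1) + 1 = ℓ - i by omega] at hedge

lemma trans (hxy : JoinedWithin S U N x y) (hyz : JoinedWithin S U M y z) :
    JoinedWithin S U (N + M) x z := by
  obtain ⟨ℓ₁, p, ⟨hp0, hpℓ, hp⟩, hℓ₁, hpU⟩ := hxy
  obtain ⟨ℓ₂, q, ⟨hq0, hqℓ, hq⟩, hℓ₂, hqU⟩ := hyz
  set r : ℕ → G := fun i => if i ≤ ℓ₁ then p i else q (i - ℓ₁)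
  have hr_fst {i : ℕ} (hi : i ≤ ℓ₁) : r i = p i := if_pos hi
  have hr_snd {i : ℕ} (hi : ℓ₁ ≤ i) : r i = q (i - ℓ₁) := by
    rcases hi.eq_or_lt with rfl | hi
    · rw [hr_fst le_rfl, hpℓ, Nat.sub_self, hq0]
    · exact if_neg (by omega)
  refine ⟨ℓ₁ + ℓ₂, r, ⟨?_, ?_, fun i hi => ?_⟩, by push_cast; linarith,
    fun i hi => ?_⟩
  · rw [hr_fst (Nat.zero_le _), hp0]
  · rw [hr_snd (by omega), Nat.add_sub_cancel_left, hqℓ]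
  · rcases lt_or_ge i ℓ₁ with hi₁ | hi₁
    · rw [hr_fst hi₁.le, hr_fst hi₁]
      exact hp i hi₁
    · rw [hr_snd hi₁, hr_snd (by omega), show i + 1 - ℓ₁ = i - ℓ₁ + 1 by omega]
      exact hq _ (by omega)
  · rcases le_total i ℓ₁ with hi₁ | hi₁
    · rw [hr_fst hi₁]; exact hpU i hi₁
    · rw [hr_snd hi₁]; exact hqU _ (by omega)

end JoinedWithin

lemma Nat.exists_eq_of_le_of_step_le_one {f : ℕ → ℕ} {n T : ℕ}
    (hstep : ∀ i < n, f (i + 1) ≤ f i + 1) (h0 : f 0 ≤ T) (hn : T ≤ f n) :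
    ∃ i ≤ n, f i = T := by
  induction n with
  | zero => exact ⟨0, le_rfl, le_antisymm h0 hn⟩
  | succ n ih =>
    by_cases h : T ≤ f n
    · obtain ⟨i, hi, hfi⟩ := ih (fun i hi => hstep i (by omega)) h
      exact ⟨i, by omega, hfi⟩
    · exact ⟨n + 1, le_rfl, by have := hstep n (by omega); omega⟩

section Escape

variable {G : Type} [Group G] [Infinite G] {S : Finset G}

/- Suppose left multiplication by `u` added at least `4` to the length of every element of
length `> N`. If some power of `u` is long, the first long one `u ^ (m + 1)` gives
`y = u ^ -(m + 1)` with `u * y = u ^ -m` short, a contradiction; if all powers of `u` are short,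
then `u ^ (N + 1) * y₀` is both longer than `y₀` by `4 (N + 1)` and by at most `N`. -/
lemma exists_wlen_mul_le_add_three (hgen : Subgroup.closure (S : Set G) = ⊤) (u : G) (N : ℕ) :
    ∃ y : G, N < wlen S y ∧ wlen S (u * y) ≤ wlen S y + 3 := by
  by_contra! H
  by_cases hpow : ∃ M, N < wlen S (u ^ M)
  · classical
    obtain ⟨m, hm⟩ : ∃ m, Nat.find hpow = m + 1 :=
      Nat.exists_eq_add_one.mpr (Nat.pos_of_ne_zero fun h0 => by
        simpa [h0, wlen_one] using Nat.find_spec hpow)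
    have hlong : N < wlen S (u ^ (m + 1)) := hm ▸ Nat.find_spec hpow
    have hshort : wlen S (u ^ m) ≤ N := not_lt.mp (Nat.find_min hpow (by omega))
    have := H (u ^ (m + 1))⁻¹ (by rwa [wlen_inv hgen])
    rw [show u * (u ^ (m + 1))⁻¹ = (u ^ m)⁻¹ by group, wlen_inv hgen, wlen_inv hgen] at this
    omega
  · push Not at hpow
    obtain ⟨y₀, hy₀⟩ := exists_lt_wlen hgen N
    have hgrowth : ∀ k : ℕ, wlen S y₀ + 4 * k ≤ wlen S (u ^ k * y₀) := by
      intro k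
      induction k with
      | zero => simp
      | succ k ih =>
        have := H (u ^ k * y₀) (by omega)
        rw [← mul_assoc, ← pow_succ'] at this
        omega
    have := hgrowth (N + 1)
    have := wlen_mul_le hgen (u ^ (N + 1)) y₀
    have := hpow (N + 1)
    omega

lemma exists_joinedWithin_sphere (hgen : Subgroup.closure (S : Set G) = ⊤) (c a : G) {R : ℕ}
    (hR : wdist S c a ≤ R) :
    ∃ w, wdist S c w = R ∧
      JoinedWithin S {g | wdist S c a ≤ 2 * wdist S c g + 3} (R + 3) a w := by
  obtain ⟨y, hy, hay⟩ := exists_wlen_mul_le_add_three hgen (a⁻¹ * c) (2 * R)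
  set w := c * y
  have hcw : wdist S c w = wlen S y := by simp [wdist, w]
  have haw : wdist S a w ≤ wdist S c w + 3 := by simpa [wdist, w, mul_assoc] using hay
  obtain ⟨p, hp⟩ := exists_geodesic hgen a w
  have hstep : ∀ i < wdist S a w, wdist S c (p (i + 1)) ≤ wdist S c (p i) + 1 := fun i hi =>
    (wdist_triangle hgen _ _ _).trans (by gcongr; simpa using hp.wdist_le hgen i.le_succ hi)
  obtain ⟨k, hk, hpk⟩ := Nat.exists_eq_of_le_of_step_le_one (f := fun i => wdist S c (p i))
    hstep (by simpa [hp.1] using hR) (by simp only [hp.2.1]; omega)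
  have hkR : k ≤ R + 3 := by
    have := wdist_triangle hgen c (p k) w
    have := hp.wdist_le hgen hk le_rfl
    rw [hp.2.1] at this
    omega
  refine ⟨p k, hpk, k, p, ⟨hp.1, rfl, fun i hi => hp.2.2 i (by omega)⟩, by exact_mod_cast hkR,
    fun i hi => ?_⟩
  have := hp.add_wdist_le_of_geodesic hgen c (hi.trans hk)
  exact (by omega : wdist S c a ≤ 2 * wdist S c (p i) + 3)

lemma joinedWithin_via_sphere (hgen : Subgroup.closure (S : Set G) = ⊤) {a b c : G} {R : ℕ}
    {ρ D : ℝ} (hR : min (wdist S c a) (wdist S c b) + wdist S a b ≤ R)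
    (hρ : ((min (wdist S c a) (wdist S c b) : ℕ) : ℝ) / 2 - 2 ≤ ρ)
    (hdet : ∀ w₁ w₂ : G, wdist S w₁ c = R → wdist S w₂ c = R →
      JoinedWithin S {g | ρ < wdist S g c} D w₁ w₂) :
    JoinedWithin S {g | ((min (wdist S c a) (wdist S c b) : ℕ) : ℝ) / 2 - 2 < wdist S g c}
      (R + 3 + D + (R + 3)) a b := by
  set r := min (wdist S c a) (wdist S c b)
  have hsphere {x : G} (hx : r ≤ wdist S c x) :
      {g | wdist S c x ≤ 2 * wdist S c g + 3} ⊆ {g | (r : ℝ) / 2 - 2 < wdist S g c} := by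
    intro g hg
    have : (r : ℝ) ≤ 2 * wdist S g c + 3 := by
      rw [wdist_comm hgen]; exact_mod_cast hx.trans hg
    simp only [Set.mem_ofPred_eq]; linarith
  have hinside : wdist S c a ≤ R ∧ wdist S c b ≤ R := by
    have := wdist_triangle hgen c a b
    have := wdist_triangle hgen c b a
    have := wdist_comm hgen a b
    omega
  obtain ⟨w₁, hw₁, ha⟩ := exists_joinedWithin_sphere hgen c a hinside.1
  obtain ⟨w₂, hw₂, hb⟩ := exists_joinedWithin_sphere hgen c b hinside.2
  have hw := hdet w₁ w₂ (by rwa [wdist_comm hgen]) (by rwa [wdist_comm hgen])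
  refine ((ha.mono (hsphere (min_le_left _ _)) le_rfl).trans
    (hw.mono (fun g hg => ?_) le_rfl)).trans (hb.mono (hsphere (min_le_right _ _)) le_rfl).symm
  simp only [Set.mem_ofPred_eq] at hg ⊢
  linarith

end Escape

lemma joinedWithin_geodesic_of_wdist_lt {G : Type} [Group G] {S : Finset G}
    (hgen : Subgroup.closure (S : Set G) = ⊤) {a b c : G}
    (hab : wdist S a b < min (wdist S c a) (wdist S c b) + 4) :
    JoinedWithin S {g | ((min (wdist S c a) (wdist S c b) : ℕ) : ℝ) / 2 - 2 < wdist S g c}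
      (wdist S a b) a b := by
  refine (joinedWithin_geodesic hgen a b c).mono (fun g hg => ?_) le_rfl
  have : min (wdist S c a) (wdist S c b) < 2 * wdist S g c + 4 := by
    have := wdist_comm hgen c g
    simp only [Set.mem_ofPred_eq] at hg
    omega
  have : ((min (wdist S c a) (wdist S c b) : ℕ) : ℝ) < 2 * wdist S g c + 4 := by
    exact_mod_cast this
  simp only [Set.mem_ofPred_eq]
  linarith

theorem stmt_5_general {G : Type} [Group G] [Infinite G] (S : Finset G)
    (hgen : Subgroup.closure (S : Set G) = ⊤)
    (ε L : ℝ) (R : ℕ) (hε : ε ≤ 1 / 4) (hL : 1 ≤ L)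
    (hdet : ∀ x₁ x₂ m : G, wdist S x₁ m = R → wdist S x₂ m = R →
      ∃ (ℓ : ℕ) (p : ℕ → G), IsPathFrom S p ℓ x₁ x₂ ∧ (ℓ : ℝ) ≤ L * R ∧
        ∀ i ≤ ℓ, ε * R < (wdist S (p i) m : ℝ)) :
    ∀ a b c : G, (wdist S a b : ℝ) ≤ ε * R →
      ∃ (ℓ : ℕ) (p : ℕ → G), IsPathFrom S p ℓ a b ∧ (ℓ : ℝ) ≤ (L + 4) * R + 1 ∧
        ∀ i ≤ ℓ, ((min (wdist S c a) (wdist S c b) : ℕ) : ℝ) / 2 - 2 <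
          (wdist S (p i) c : ℝ) := by
  intro a b c hab
  set r := min (wdist S c a) (wdist S c b)
  have hεR : ε * R ≤ R / 4 := by nlinarith [(Nat.cast_nonneg R : (0 : ℝ) ≤ R)]
  have hr : (0 : ℝ) ≤ r := Nat.cast_nonneg r
  show JoinedWithin S {g | (r : ℝ) / 2 - 2 < wdist S g c} ((L + 4) * R + 1) a b
  rcases le_or_gt ((r : ℝ) + 4) (ε * R) with hclose | hfar
  · have hR : r + wdist S a b ≤ R := by
      exact_mod_cast (by linarith : (r + wdist S a b : ℝ) ≤ R)
    exact (joinedWithin_via_sphere hgen hR (by linarith) fun w₁ w₂ => hdet w₁ w₂ c).mono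
      subset_rfl (by nlinarith)
  · have hab' : wdist S a b < r + 4 := by
      exact_mod_cast (by linarith : (wdist S a b : ℝ) < r + 4)
    exact (joinedWithin_geodesic_of_wdist_lt hgen hab').mono subset_rfl (by nlinarith)

/-- If in the Cayley graph `X` of an infinite group there are
`0 < ε ≤ 1/4`, `L ≥ 1`, `R ∈ ℕ` with `εR ≥ 1` such that any `x₁, x₂, m` with
`d(x₁,m) = d(x₂,m) = R` are joined by a path of length `≤ LR` avoiding `B_{εR}(m)`,
then `Div(εR) ≤ (L+4)R + 1`, i.e. any `a, b` with `d(a,b) ≤ εR` are joined by a path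
of length at most `(L+4)R + 1` avoiding the ball of radius `r/2 - 2` around any `c`,
where `r = d(c,{a,b})`. -/
theorem stmt_5 {G : Type} [Group G] [Infinite G] (S : Finset G)
    (hgen : Subgroup.closure (S : Set G) = ⊤)
    (ε L : ℝ) (R : ℕ) (hε0 : 0 < ε) (hε : ε ≤ 1 / 4) (hL : 1 ≤ L) (hεR : 1 ≤ ε * R)
    (hdet : ∀ x₁ x₂ m : G, wdist S x₁ m = R → wdist S x₂ m = R →
      ∃ (ℓ : ℕ) (p : ℕ → G), IsPathFrom S p ℓ x₁ x₂ ∧ (ℓ : ℝ) ≤ L * R ∧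
        ∀ i ≤ ℓ, ε * R < (wdist S (p i) m : ℝ)) :
    ∀ a b c : G, (wdist S a b : ℝ) ≤ ε * R →
      ∃ (ℓ : ℕ) (p : ℕ → G), IsPathFrom S p ℓ a b ∧ (ℓ : ℝ) ≤ (L + 4) * R + 1 ∧
        ∀ i ≤ ℓ, ((min (wdist S c a) (wdist S c b) : ℕ) : ℝ) / 2 - 2 <
          (wdist S (p i) c : ℝ) :=
  stmt_5_general S hgen ε L R hε hL hdet
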